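/- The Jacobian (differential in x) of the denoiser x̂₁(x) = ∫ x₁ p_t(x₁|x) dx₁ equals (α_t/σ_t²) · Var(x₁|x), where Var(x₁|x) = ∫ (x₁ − x̂₁)(x₁ − x̂₁)ᵀ p_t(x₁|x) dx₁ is the posterior covariance matrix. In particular, the denoiser Jacobian is symmetric positive semidefinite. -/

import Mathlib

open Real MeasureTheory
open scoped RealInnerProductSpace

/-- Gaussian density on `ℝ^d` with mean `μ` and covariance `σ² I`. -/
noncomputable def gaussDensity (d : ℕ) (μ : EuclideanSpace ℝ (Fin d)) (σ : ℝ)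
    (x : EuclideanSpace ℝ (Fin d)) : ℝ :=
  (2 * π * σ ^ 2) ^ (-(d : ℝ) / 2) * Real.exp (-‖x - μ‖ ^ 2 / (2 * σ ^ 2))

/-- The AGPP marginal density `p_t(x) = ∫ N(x|α_t x₁, σ_t² I) q(x₁) dx₁`. -/
noncomputable def marginal (d : ℕ) (αt σt : ℝ) (q : EuclideanSpace ℝ (Fin d) → ℝ)
    (x : EuclideanSpace ℝ (Fin d)) : ℝ :=
  ∫ x₁, gaussDensity d (αt • x₁) σt x * q x₁

/-- The posterior density `p_t(x₁|x) = N(x|α_t x₁, σ_t² I) q(x₁) / p_t(x)`. -/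
noncomputable def posterior (d : ℕ) (αt σt : ℝ) (q : EuclideanSpace ℝ (Fin d) → ℝ)
    (x₁ x : EuclideanSpace ℝ (Fin d)) : ℝ :=
  gaussDensity d (αt • x₁) σt x * q x₁ / marginal d αt σt q x

/-- The denoiser (posterior mean) `x̂₁(x) = ∫ x₁ p_t(x₁|x) dx₁`. -/
noncomputable def denoiser (d : ℕ) (αt σt : ℝ) (q : EuclideanSpace ℝ (Fin d) → ℝ)
    (x : EuclideanSpace ℝ (Fin d)) : EuclideanSpace ℝ (Fin d) :=
  ∫ x₁, posterior d αt σt q x₁ x • x₁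

/-!
The posterior is the joint density `N(x | α x₁, σ² I) q(x₁)` divided by the marginal.
Differentiating the Gaussian factor in `x` brings down `(α x₁ - x) / σ²`; differentiating the
marginal under the integral sign (legitimate because `N(x | μ, σ² I) ‖x - μ‖` is bounded, so the
derivative is dominated by a multiple of `|q|`) brings down the posterior average of the same
factor. Hence `∇ₓ p_t(x₁|x) = (α/σ²) p_t(x₁|x) (x₁ - x̂₁)`. In the differentiated denoiser the
factor `x₁` may then be replaced by `x₁ - x̂₁`, which has posterior mean zero, and
`⟪J v, w⟫ = (α/σ²) ∫ p_t(x₁|x) ⟪x₁ - x̂₁, v⟫ ⟪x₁ - x̂₁, w⟫` is symmetric and nonnegative. All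
posterior moments involved are finite because `N(x | α x₁, σ² I) (1 + ‖x₁‖)²` is bounded in `x₁`.
-/

lemma sq_mul_exp_neg_sq_div_le {σ : ℝ} (hσ : σ ≠ 0) (t : ℝ) :
    t ^ 2 * exp (-t ^ 2 / (2 * σ ^ 2)) ≤ 2 * σ ^ 2 := by
  have hu := mul_exp_neg_le_exp_neg_one (t ^ 2 / (2 * σ ^ 2))
  have he : exp (-1) ≤ 1 := exp_le_one_iff.2 (by norm_num)
  calc t ^ 2 * exp (-t ^ 2 / (2 * σ ^ 2))
      = 2 * σ ^ 2 * (t ^ 2 / (2 * σ ^ 2) * exp (-(t ^ 2 / (2 * σ ^ 2)))) := by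
        field_simp
    _ ≤ 2 * σ ^ 2 * 1 := by gcongr; exact hu.trans he
    _ = 2 * σ ^ 2 := mul_one _

lemma norm_sub_le_one_add_mul_one_add {E : Type*} [SeminormedAddCommGroup E] (x c : E) :
    ‖x - c‖ ≤ (1 + ‖c‖) * (1 + ‖x‖) := by
  nlinarith [norm_sub_le x c, norm_nonneg x, norm_nonneg c]

lemma norm_inner_sub_smul_sub_le {E : Type*} [NormedAddCommGroup E] [InnerProductSpace ℝ E]
    (x c v : E) : ‖⟪x - c, v⟫ • (x - c)‖ ≤ ‖v‖ * (1 + ‖c‖) ^ 2 * (1 + ‖x‖) ^ 2 :=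
  calc ‖⟪x - c, v⟫ • (x - c)‖ ≤ ‖x - c‖ * ‖v‖ * ‖x - c‖ := by
        rw [norm_smul, Real.norm_eq_abs]; gcongr; exact abs_real_inner_le_norm _ _
    _ = ‖v‖ * ‖x - c‖ ^ 2 := by ring
    _ ≤ ‖v‖ * ((1 + ‖c‖) * (1 + ‖x‖)) ^ 2 := by
        gcongr; exact norm_sub_le_one_add_mul_one_add x c
    _ = ‖v‖ * (1 + ‖c‖) ^ 2 * (1 + ‖x‖) ^ 2 := by ring

section Covariance

variable {Ω E : Type*} [MeasurableSpace Ω] {μ : Measure Ω} [NormedAddCommGroup E]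
  [InnerProductSpace ℝ E] [CompleteSpace E] {p : Ω → ℝ}

lemma integral_mul_inner_sub_smul_eq_smul_sub {u : Ω → E} {m : E} (hp : Integrable p μ)
    (hp1 : ∫ a, p a ∂μ = 1) (hpu : Integrable (fun a => p a • u a) μ)
    (hm : ∫ a, p a • u a ∂μ = m) (v : E)
    (hcov : Integrable (fun a => (p a * ⟪u a - m, v⟫) • (u a - m)) μ) :
    ∫ a, (p a * ⟪u a - m, v⟫) • u a ∂μ = ∫ a, (p a * ⟪u a - m, v⟫) • (u a - m) ∂μ := by
  have hcentered : Integrable (fun a => p a • (u a - m)) μ := by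
    simp_rw [smul_sub]; exact hpu.sub (hp.smul_const m)
  have hmean : ∫ a, p a • (u a - m) ∂μ = 0 := by
    simp_rw [smul_sub]
    rw [integral_sub hpu (hp.smul_const m), integral_smul_const, hp1, hm, one_smul, sub_self]
  have hscalar : Integrable (fun a => p a * ⟪u a - m, v⟫) μ := by
    simpa only [real_inner_smul_left] using hcentered.inner_const (𝕜 := ℝ) v
  have hzero : ∫ a, p a * ⟪u a - m, v⟫ ∂μ = 0 :=
    calc ∫ a, p a * ⟪u a - m, v⟫ ∂μ = ∫ a, ⟪v, p a • (u a - m)⟫ ∂μ := by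
          simp only [real_inner_smul_right, real_inner_comm v]
      _ = 0 := by rw [integral_inner hcentered v, hmean, inner_zero_right]
  calc ∫ a, (p a * ⟪u a - m, v⟫) • u a ∂μ
      = ∫ a, ((p a * ⟪u a - m, v⟫) • (u a - m) + (p a * ⟪u a - m, v⟫) • m) ∂μ := by
        simp only [← smul_add, sub_add_cancel]
    _ = ∫ a, (p a * ⟪u a - m, v⟫) • (u a - m) ∂μ := by
        rw [integral_add hcov (hscalar.smul_const m), integral_smul_const, hzero, zero_smul,
          add_zero]

variable {f : Ω → E}

lemma inner_integral_mul_inner_smul {v : E}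
    (hv : Integrable (fun a => (p a * ⟪f a, v⟫) • f a) μ) (w : E) :
    ⟪∫ a, (p a * ⟪f a, v⟫) • f a ∂μ, w⟫ = ∫ a, p a * ⟪f a, v⟫ * ⟪f a, w⟫ ∂μ := by
  rw [real_inner_comm, ← integral_inner hv]
  congr with a
  rw [real_inner_smul_right, real_inner_comm (f a) w]

lemma inner_integral_mul_inner_smul_comm {v w : E}
    (hv : Integrable (fun a => (p a * ⟪f a, v⟫) • f a) μ)
    (hw : Integrable (fun a => (p a * ⟪f a, w⟫) • f a) μ) :
    ⟪∫ a, (p a * ⟪f a, v⟫) • f a ∂μ, w⟫ = ⟪v, ∫ a, (p a * ⟪f a, w⟫) • f a ∂μ⟫ := by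
  rw [real_inner_comm _ v, inner_integral_mul_inner_smul hv, inner_integral_mul_inner_smul hw]
  simp only [mul_right_comm]

lemma inner_integral_mul_inner_smul_self_nonneg (hp : ∀ a, 0 ≤ p a) {v : E}
    (hv : Integrable (fun a => (p a * ⟪f a, v⟫) • f a) μ) :
    0 ≤ ⟪∫ a, (p a * ⟪f a, v⟫) • f a ∂μ, v⟫ := by
  rw [inner_integral_mul_inner_smul hv]
  exact integral_nonneg fun a => by rw [mul_assoc]; exact mul_nonneg (hp a) (mul_self_nonneg _)

end Covariance

section Gaussian

variable {d : ℕ} {σ : ℝ}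

lemma gaussDensity_pos (hσ : σ ≠ 0) (μ x : EuclideanSpace ℝ (Fin d)) :
    0 < gaussDensity d μ σ x := by
  unfold gaussDensity
  have : 0 < 2 * π * σ ^ 2 := by positivity
  positivity

lemma exists_gaussDensity_mul_one_add_norm_sub_sq_le (hσ : σ ≠ 0) :
    ∃ C, ∀ μ x : EuclideanSpace ℝ (Fin d), gaussDensity d μ σ x * (1 + ‖x - μ‖) ^ 2 ≤ C := by
  refine ⟨(2 * π * σ ^ 2) ^ (-(d : ℝ) / 2) * (2 + 4 * σ ^ 2), fun μ x => ?_⟩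
  set t := ‖x - μ‖
  have hE : exp (-t ^ 2 / (2 * σ ^ 2)) ≤ 1 := exp_le_one_iff.2 (by
    rw [neg_div]; exact neg_nonpos.2 (by positivity))
  have htE := sq_mul_exp_neg_sq_div_le hσ t
  have h0 := (exp_pos (-t ^ 2 / (2 * σ ^ 2))).le
  have hbound : (1 + t) ^ 2 * exp (-t ^ 2 / (2 * σ ^ 2)) ≤ 2 + 4 * σ ^ 2 := by
    nlinarith [sq_nonneg (1 - t)]
  unfold gaussDensity
  calc (2 * π * σ ^ 2) ^ (-(d : ℝ) / 2) * exp (-t ^ 2 / (2 * σ ^ 2)) * (1 + t) ^ 2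
      = (2 * π * σ ^ 2) ^ (-(d : ℝ) / 2) * ((1 + t) ^ 2 * exp (-t ^ 2 / (2 * σ ^ 2))) := by
        ring
    _ ≤ _ := by gcongr

lemma hasGradientAt_gaussDensity (hσ : σ ≠ 0) (μ x : EuclideanSpace ℝ (Fin d)) :
    HasGradientAt (gaussDensity d μ σ) ((gaussDensity d μ σ x / σ ^ 2) • (μ - x)) x := by
  have hfun : gaussDensity d μ σ = fun z => (2 * π * σ ^ 2) ^ (-(d : ℝ) / 2) *
      exp (-(2 * σ ^ 2)⁻¹ * ‖z - μ‖ ^ 2) := by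
    funext z; simp only [gaussDensity]; ring_nf
  have h := (((hasFDerivAt_sub_const (x := x) μ).norm_sq.const_mul (-(2 * σ ^ 2)⁻¹)).exp).const_mul
    ((2 * π * σ ^ 2) ^ (-(d : ℝ) / 2))
  rw [hasGradientAt_iff_hasFDerivAt, hfun]
  refine h.congr_fderiv ?_
  ext v
  simp only [InnerProductSpace.toDual_apply_apply, real_inner_smul_left,
    smul_apply, ContinuousLinearMap.comp_apply, innerSL_apply_apply,
    ContinuousLinearMap.id_apply, smul_eq_mul, nsmul_eq_mul]
  rw [← neg_sub x μ, inner_neg_left]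
  field_simp
  ring

end Gaussian

noncomputable def jointDensity (d : ℕ) (α σ : ℝ) (q : EuclideanSpace ℝ (Fin d) → ℝ)
    (x₁ x : EuclideanSpace ℝ (Fin d)) : ℝ :=
  gaussDensity d (α • x₁) σ x * q x₁

section Joint

variable {d : ℕ} {α σ : ℝ} {q : EuclideanSpace ℝ (Fin d) → ℝ}

lemma exists_gaussDensity_smul_mul_one_add_norm_sq_le (hα : α ≠ 0) (hσ : σ ≠ 0)
    (x : EuclideanSpace ℝ (Fin d)) :
    ∃ K, ∀ x₁, gaussDensity d (α • x₁) σ x * (1 + ‖x₁‖) ^ 2 ≤ K := by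
  obtain ⟨C, hC⟩ := exists_gaussDensity_mul_one_add_norm_sub_sq_le (d := d) hσ
  set B := (|α| + 1 + ‖x‖) / |α|
  refine ⟨B ^ 2 * C, fun x₁ => ?_⟩
  have hnorm : |α| * ‖x₁‖ ≤ ‖x - α • x₁‖ + ‖x‖ := by
    rw [← Real.norm_eq_abs, ← norm_smul, norm_sub_rev]
    simpa using norm_sub_le_norm_sub_add_norm_sub (α • x₁) x 0
  have hB : 1 + ‖x₁‖ ≤ B * (1 + ‖x - α • x₁‖) := by
    rw [div_mul_eq_mul_div, le_div_iff₀ (abs_pos.2 hα)]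
    nlinarith [norm_nonneg x, norm_nonneg (x - α • x₁), abs_nonneg α]
  have hg := (gaussDensity_pos hσ (α • x₁) x).le
  calc gaussDensity d (α • x₁) σ x * (1 + ‖x₁‖) ^ 2
      ≤ gaussDensity d (α • x₁) σ x * (B * (1 + ‖x - α • x₁‖)) ^ 2 := by
        gcongr
    _ = B ^ 2 * (gaussDensity d (α • x₁) σ x * (1 + ‖x - α • x₁‖) ^ 2) := by ring
    _ ≤ B ^ 2 * C := by gcongr; exact hC _ _

lemma integrable_jointDensity_smul (hα : α ≠ 0) (hσ : σ ≠ 0) (hq : Integrable q)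
    {F : Type*} [NormedAddCommGroup F] [NormedSpace ℝ F] {φ : EuclideanSpace ℝ (Fin d) → F}
    (hφ : Continuous φ) {c : ℝ} (hφc : ∀ x₁, ‖φ x₁‖ ≤ c * (1 + ‖x₁‖) ^ 2)
    (x : EuclideanSpace ℝ (Fin d)) :
    Integrable (fun x₁ => jointDensity d α σ q x₁ x • φ x₁) := by
  obtain ⟨K, hK⟩ := exists_gaussDensity_smul_mul_one_add_norm_sq_le hα hσ x
  have hg : Continuous fun x₁ => gaussDensity d (α • x₁) σ x := by
    unfold gaussDensity; fun_prop
  have hbdd : ∀ x₁, ‖gaussDensity d (α • x₁) σ x • φ x₁‖ ≤ |c| * K := fun x₁ => by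
    have hg0 := (gaussDensity_pos hσ (α • x₁) x).le
    rw [norm_smul, Real.norm_of_nonneg hg0]
    calc gaussDensity d (α • x₁) σ x * ‖φ x₁‖
        ≤ gaussDensity d (α • x₁) σ x * (|c| * (1 + ‖x₁‖) ^ 2) := by
          gcongr; exact (hφc x₁).trans (by gcongr; exact le_abs_self c)
      _ = |c| * (gaussDensity d (α • x₁) σ x * (1 + ‖x₁‖) ^ 2) := by ring
      _ ≤ |c| * K := by gcongr; exact hK x₁
  have h := hq.smul_bdd (|c| * K) (hg.smul hφ).aestronglyMeasurable (.of_forall hbdd)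
  convert h using 2 with x₁
  simp only [jointDensity, Pi.smul_apply', mul_comm, mul_smul]

lemma integrable_jointDensity (hα : α ≠ 0) (hσ : σ ≠ 0) (hq : Integrable q)
    (x : EuclideanSpace ℝ (Fin d)) : Integrable (fun x₁ => jointDensity d α σ q x₁ x) := by
  simpa using integrable_jointDensity_smul hα hσ hq continuous_const (φ := fun _ => (1 : ℝ))
    (c := 1) (fun x₁ => by rw [norm_one, one_mul]; nlinarith [norm_nonneg x₁]) x

lemma integrable_jointDensity_smul_self (hα : α ≠ 0) (hσ : σ ≠ 0) (hq : Integrable q)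
    (x : EuclideanSpace ℝ (Fin d)) : Integrable (fun x₁ => jointDensity d α σ q x₁ x • x₁) :=
  integrable_jointDensity_smul hα hσ hq continuous_id (c := 1)
    (fun x₁ => by simp only [id, one_mul]; nlinarith [norm_nonneg x₁]) x

lemma integrable_jointDensity_smul_sub (hα : α ≠ 0) (hσ : σ ≠ 0) (hq : Integrable q)
    (x : EuclideanSpace ℝ (Fin d)) :
    Integrable (fun x₁ => jointDensity d α σ q x₁ x • (α • x₁ - x)) := by
  simp_rw [smul_sub, smul_comm _ α]
  exact ((integrable_jointDensity_smul_self hα hσ hq x).fun_smul α).sub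
    ((integrable_jointDensity hα hσ hq x).smul_const x)

lemma integral_jointDensity_smul_sub (hα : α ≠ 0) (hσ : σ ≠ 0) (hq : Integrable q)
    (x : EuclideanSpace ℝ (Fin d)) :
    ∫ x₁, jointDensity d α σ q x₁ x • (α • x₁ - x) =
      α • (∫ x₁, jointDensity d α σ q x₁ x • x₁) - marginal d α σ q x • x := by
  simp_rw [smul_sub, smul_comm _ α]
  rw [integral_sub ((integrable_jointDensity_smul_self hα hσ hq x).fun_smul α)
    ((integrable_jointDensity hα hσ hq x).smul_const x), integral_smul, integral_smul_const]
  rfl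

lemma exists_norm_jointDensity_smul_sub_le (hσ : σ ≠ 0) :
    ∃ C, ∀ x₁ z, ‖jointDensity d α σ q x₁ z • (α • x₁ - z)‖ ≤ C * ‖q x₁‖ := by
  obtain ⟨C, hC⟩ := exists_gaussDensity_mul_one_add_norm_sub_sq_le (d := d) hσ
  refine ⟨C, fun x₁ z => ?_⟩
  have hg := (gaussDensity_pos hσ (α • x₁) z).le
  rw [norm_smul, jointDensity, norm_mul, Real.norm_of_nonneg hg, norm_sub_rev]
  calc gaussDensity d (α • x₁) σ z * ‖q x₁‖ * ‖z - α • x₁‖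
      = gaussDensity d (α • x₁) σ z * ‖z - α • x₁‖ * ‖q x₁‖ := by ring
    _ ≤ gaussDensity d (α • x₁) σ z * (1 + ‖z - α • x₁‖) ^ 2 * ‖q x₁‖ := by
        gcongr; nlinarith [norm_nonneg (z - α • x₁)]
    _ ≤ C * ‖q x₁‖ := by gcongr; exact hC _ _

lemma hasGradientAt_jointDensity (hσ : σ ≠ 0) (x₁ x : EuclideanSpace ℝ (Fin d)) :
    HasGradientAt (jointDensity d α σ q x₁)
      ((σ ^ 2)⁻¹ • jointDensity d α σ q x₁ x • (α • x₁ - x)) x := by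
  have h := (hasGradientAt_gaussDensity hσ (α • x₁) x).hasFDerivAt.mul_const (q x₁)
  rw [hasGradientAt_iff_hasFDerivAt]
  refine h.congr_fderiv ?_
  ext v
  simp only [jointDensity, InnerProductSpace.toDual_apply_apply, smul_apply,
    real_inner_smul_left, smul_eq_mul]
  ring

lemma hasGradientAt_marginal (hα : α ≠ 0) (hσ : σ ≠ 0) (hq : Integrable q)
    (x : EuclideanSpace ℝ (Fin d)) :
    HasGradientAt (marginal d α σ q)
      ((σ ^ 2)⁻¹ • ∫ x₁, jointDensity d α σ q x₁ x • (α • x₁ - x)) x := by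
  obtain ⟨C, hC⟩ := exists_norm_jointDensity_smul_sub_le (d := d) (α := α) (q := q) hσ
  have hint := (integrable_jointDensity_smul_sub hα hσ hq x).fun_smul (σ ^ 2)⁻¹
  have h := hasFDerivAt_integral_of_dominated_of_fderiv_le (x₀ := x) Filter.univ_mem
    (F := fun z x₁ => jointDensity d α σ q x₁ z)
    (F' := fun z x₁ => innerSL ℝ ((σ ^ 2)⁻¹ • jointDensity d α σ q x₁ z • (α • x₁ - z)))
    (.of_forall fun z => (integrable_jointDensity hα hσ hq z).aestronglyMeasurable)
    (integrable_jointDensity hα hσ hq x)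
    ((innerSL ℝ).continuous.comp_aestronglyMeasurable hint.aestronglyMeasurable)
    (.of_forall fun x₁ z _ => by rw [innerSL_apply_norm, norm_smul]; gcongr; exact hC x₁ z)
    ((hq.norm.const_mul C).const_mul ‖(σ ^ 2)⁻¹‖)
    (.of_forall fun x₁ z _ => hasGradientAt_jointDensity hσ x₁ z)
  rw [hasGradientAt_iff_hasFDerivAt, ← integral_smul]
  change HasFDerivAt _ (innerSL ℝ (∫ x₁, (σ ^ 2)⁻¹ • _)) x
  rwa [← (innerSL ℝ).integral_comp_comm hint]

end Joint

section Posterior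

variable {d : ℕ} {α σ : ℝ} {q : EuclideanSpace ℝ (Fin d) → ℝ}

lemma posterior_eq (x₁ x : EuclideanSpace ℝ (Fin d)) :
    posterior d α σ q x₁ x = jointDensity d α σ q x₁ x / marginal d α σ q x := rfl

lemma posterior_nonneg (hσ : σ ≠ 0) (hq : ∀ x₁, 0 ≤ q x₁) (x₁ x : EuclideanSpace ℝ (Fin d)) :
    0 ≤ posterior d α σ q x₁ x :=
  div_nonneg (mul_nonneg (gaussDensity_pos hσ _ x).le (hq x₁))
    (integral_nonneg fun y => mul_nonneg (gaussDensity_pos hσ _ x).le (hq y))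

lemma integral_posterior {x : EuclideanSpace ℝ (Fin d)} (hm : marginal d α σ q x ≠ 0) :
    ∫ x₁, posterior d α σ q x₁ x = 1 := by
  simp_rw [posterior_eq]
  rw [integral_div]
  exact div_self hm

lemma integrable_posterior_smul {F : Type*} [NormedAddCommGroup F] [NormedSpace ℝ F]
    {φ : EuclideanSpace ℝ (Fin d) → F} {x : EuclideanSpace ℝ (Fin d)}
    (h : Integrable (fun x₁ => jointDensity d α σ q x₁ x • φ x₁)) :
    Integrable (fun x₁ => posterior d α σ q x₁ x • φ x₁) := by
  convert h.fun_smul (marginal d α σ q x)⁻¹ using 2 with x₁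
  rw [posterior_eq, div_eq_inv_mul, mul_smul]

lemma integrable_posterior_mul_inner_sub_smul_sub (hα : α ≠ 0) (hσ : σ ≠ 0) (hq : Integrable q)
    (x c v : EuclideanSpace ℝ (Fin d)) :
    Integrable (fun x₁ => (posterior d α σ q x₁ x * ⟪x₁ - c, v⟫) • (x₁ - c)) := by
  simp_rw [mul_smul]
  exact integrable_posterior_smul
    (integrable_jointDensity_smul hα hσ hq (by fun_prop) (norm_inner_sub_smul_sub_le · c v) x)

lemma integral_jointDensity_smul_self {x : EuclideanSpace ℝ (Fin d)}
    (hm : marginal d α σ q x ≠ 0) :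
    ∫ x₁, jointDensity d α σ q x₁ x • x₁ = marginal d α σ q x • denoiser d α σ q x := by
  simp_rw [denoiser, posterior_eq, div_eq_inv_mul, mul_smul]
  rw [integral_smul, smul_inv_smul₀ hm]

lemma hasGradientAt_posterior (hα : α ≠ 0) (hσ : σ ≠ 0) (hq : Integrable q)
    {x : EuclideanSpace ℝ (Fin d)} (hm : marginal d α σ q x ≠ 0) (x₁ : EuclideanSpace ℝ (Fin d)) :
    HasGradientAt (posterior d α σ q x₁)
      ((α / σ ^ 2 * posterior d α σ q x₁ x) • (x₁ - denoiser d α σ q x)) x := by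
  have h := (hasGradientAt_jointDensity (α := α) (q := q) hσ x₁ x).hasFDerivAt.mul
    ((hasFDerivAt_inv hm).comp x (hasGradientAt_marginal hα hσ hq x).hasFDerivAt)
  have hfun : posterior d α σ q x₁ = fun z =>
      jointDensity d α σ q x₁ z * (marginal d α σ q z)⁻¹ :=
    funext fun z => div_eq_mul_inv _ _
  rw [hasGradientAt_iff_hasFDerivAt, hfun]
  refine h.congr_fderiv ?_
  ext v
  simp only [InnerProductSpace.toDual_apply_apply, add_apply,
    smul_apply, ContinuousLinearMap.comp_apply,
    ContinuousLinearMap.toSpanSingleton_apply, Function.comp_apply, smul_eq_mul]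
  rw [integral_jointDensity_smul_sub hα hσ hq, integral_jointDensity_smul_self hm]
  simp only [real_inner_smul_left, inner_sub_left]
  field_simp
  ring

end Posterior

theorem denoiser_jacobian_eq_covariance_general (d : ℕ) (αt σt : ℝ) (hα : 0 < αt) (hσ : 0 < σt)
    (q : EuclideanSpace ℝ (Fin d) → ℝ) (hq_nonneg : ∀ x₁, 0 ≤ q x₁)
    (hq_prob : ∫ x₁ : EuclideanSpace ℝ (Fin d), q x₁ = 1)
    (x : EuclideanSpace ℝ (Fin d)) (hpos : 0 < marginal d αt σt q x)
    -- differentiation under the integral sign is valid for the denoiser: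
    (hswap : ∀ v : EuclideanSpace ℝ (Fin d),
      fderiv ℝ (denoiser d αt σt q) x v =
        ∫ x₁, ⟪gradient (fun z => posterior d αt σt q x₁ z) x, v⟫ • x₁) :
    (∀ v : EuclideanSpace ℝ (Fin d),
        fderiv ℝ (denoiser d αt σt q) x v =
          (αt / σt ^ 2) •
            ∫ x₁, (posterior d αt σt q x₁ x * ⟪x₁ - denoiser d αt σt q x, v⟫) •
              (x₁ - denoiser d αt σt q x)) ∧
    (∀ v w : EuclideanSpace ℝ (Fin d),
        ⟪fderiv ℝ (denoiser d αt σt q) x v, w⟫ = ⟪v, fderiv ℝ (denoiser d αt σt q) x w⟫) ∧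
    (∀ v : EuclideanSpace ℝ (Fin d), 0 ≤ ⟪fderiv ℝ (denoiser d αt σt q) x v, v⟫) := by
  have hm : marginal d αt σt q x ≠ 0 := hpos.ne'
  have hq : Integrable q := .of_integral_ne_zero (by rw [hq_prob]; exact one_ne_zero)
  have hcov := integrable_posterior_mul_inner_sub_smul_sub hα.ne' hσ.ne' hq x
    (denoiser d αt σt q x)
  have hp : Integrable (posterior d αt σt q · x) :=
    (integrable_jointDensity hα.ne' hσ.ne' hq x).div_const _
  have hpu : Integrable (fun x₁ => posterior d αt σt q x₁ x • x₁) :=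
    integrable_posterior_smul (integrable_jointDensity_smul_self hα.ne' hσ.ne' hq x)
  have hjac : ∀ v, fderiv ℝ (denoiser d αt σt q) x v = (αt / σt ^ 2) •
      ∫ x₁, (posterior d αt σt q x₁ x * ⟪x₁ - denoiser d αt σt q x, v⟫) •
        (x₁ - denoiser d αt σt q x) := fun v => by
    rw [hswap v, ← integral_mul_inner_sub_smul_eq_smul_sub (m := denoiser d αt σt q x) hp
      (integral_posterior hm) hpu rfl v (hcov v), ← integral_smul]
    congr with x₁
    rw [(hasGradientAt_posterior hα.ne' hσ.ne' hq hm x₁).gradient, real_inner_smul_left,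
      mul_assoc, mul_smul]
  refine ⟨hjac, fun v w => ?_, fun v => ?_⟩
  · rw [hjac, hjac, real_inner_smul_left, real_inner_smul_right,
      inner_integral_mul_inner_smul_comm (hcov v) (hcov w)]
  · rw [hjac, real_inner_smul_left]
    exact mul_nonneg (by positivity) (inner_integral_mul_inner_smul_self_nonneg
      (posterior_nonneg hσ.ne' hq_nonneg · x) (hcov v))

/-- The Jacobian of the denoiser equals `(α_t/σ_t²) · Var(x₁|x)`, where `Var(x₁|x)`
is the posterior covariance; in particular it is symmetric positive semidefinite. -/
theorem denoiser_jacobian_eq_covariance (d : ℕ) (αt σt : ℝ) (hα : 0 < αt) (hσ : 0 < σt)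
    (q : EuclideanSpace ℝ (Fin d) → ℝ) (hq_nonneg : ∀ x₁, 0 ≤ q x₁)
    (hq_prob : ∫ x₁ : EuclideanSpace ℝ (Fin d), q x₁ = 1)
    (x : EuclideanSpace ℝ (Fin d)) (hpos : 0 < marginal d αt σt q x)
    (hdiff : DifferentiableAt ℝ (denoiser d αt σt q) x)
    -- differentiation under the integral sign is valid for the denoiser:
    (hswap : ∀ v : EuclideanSpace ℝ (Fin d),
      fderiv ℝ (denoiser d αt σt q) x v =
        ∫ x₁, ⟪gradient (fun z => posterior d αt σt q x₁ z) x, v⟫ • x₁) :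
    (∀ v : EuclideanSpace ℝ (Fin d),
        fderiv ℝ (denoiser d αt σt q) x v =
          (αt / σt ^ 2) •
            ∫ x₁, (posterior d αt σt q x₁ x * ⟪x₁ - denoiser d αt σt q x, v⟫) •
              (x₁ - denoiser d αt σt q x)) ∧
    (∀ v w : EuclideanSpace ℝ (Fin d),
        ⟪fderiv ℝ (denoiser d αt σt q) x v, w⟫ = ⟪v, fderiv ℝ (denoiser d αt σt q) x w⟫) ∧
    (∀ v : EuclideanSpace ℝ (Fin d), 0 ≤ ⟪fderiv ℝ (denoiser d αt σt q) x v, v⟫) :=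
  denoiser_jacobian_eq_covariance_general d αt σt hα hσ q hq_nonneg hq_prob x hpos hswap
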